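/- Let 𝕊 be a K×K {0,1}-matrix each of whose rows contains at least one entry 1, and S_1, …, S_K ∈ ℝ^{d×d}, with Kozyakin 𝕊-lift S^{(1)}, …, S^{(K)} ∈ ℝ^{Kd×Kd}. Then for every n ≥ 2 and every 𝕊-admissible word (i_0, …, i_{n-1}) ∈ {1,…,K}^n, one has the product formula S^{(i_0)} ⋯ S^{(i_{n-1})} = (δ_{i_0}ᵀ 𝕊_{i_{n-1}}) ⊗ (S_{i_0} ⋯ S_{i_{n-1}}), where δ_{i_0}ᵀ 𝕊_{i_{n-1}} ∈ ℝ^{K×K} and ⊗ is the Kronecker product. -/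
import Mathlib


open MeasureTheory Filter Matrix
open scoped Kronecker

/-- The ℓ²-operator norm of a real square matrix. -/
noncomputable def l2OpNorm {ι : Type*} [Fintype ι] [DecidableEq ι]
    (A : Matrix ι ι ℝ) : ℝ :=
  ‖Matrix.toEuclideanCLM (𝕜 := ℝ) A‖

/-- The spectral radius of a real square matrix: the maximum of the absolute values
of its (complex) eigenvalues. -/
noncomputable def specRad {ι : Type*} [Fintype ι] [DecidableEq ι]
    (A : Matrix ι ι ℝ) : ℝ :=
  (spectralRadius ℂ (A.map (fun x => (x : ℂ)))).toReal

/-- The ordered product `S_{w 0} * S_{w 1} * ⋯ * S_{w (n-1)}`. -/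
noncomputable def wordProd {K : ℕ} {ι : Type*} [Fintype ι] [DecidableEq ι]
    (S : Fin K → Matrix ι ι ℝ) (n : ℕ) (w : ℕ → Fin K) : Matrix ι ι ℝ :=
  (List.ofFn fun k : Fin n => S (w k)).prod

/-- The word `(w 0, …, w (n-1))` is `𝕊`-admissible. -/
def Admissible {K : ℕ} (𝕊 : Matrix (Fin K) (Fin K) ℝ) (n : ℕ) (w : ℕ → Fin K) : Prop :=
  ∀ k, k + 1 < n → 𝕊 (w k) (w (k + 1)) = 1

/-- The word `(w 0, …, w (n-1))` is `𝕊`-periodically extendable. -/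
def PerExt {K : ℕ} (𝕊 : Matrix (Fin K) (Fin K) ℝ) (n : ℕ) (w : ℕ → Fin K) : Prop :=
  Admissible 𝕊 n w ∧ 𝕊 (w (n - 1)) (w 0) = 1

/-- The Kozyakin `𝕊`-lift `S^{(k)} = (δ_kᵀ 𝕊_k) ⊗ S_k`. -/
noncomputable def kozLift {K d : ℕ} (𝕊 : Matrix (Fin K) (Fin K) ℝ)
    (S : Fin K → Matrix (Fin d) (Fin d) ℝ) (k : Fin K) :
    Matrix (Fin K × Fin d) (Fin K × Fin d) ℝ :=
  (Matrix.vecMulVec (Pi.single k 1) (𝕊 k)) ⊗ₖ S k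

lemma vmv_mul {K : ℕ} (u v x y : Fin K → ℝ) :
    Matrix.vecMulVec u v * Matrix.vecMulVec x y = (v ⬝ᵥ x) • Matrix.vecMulVec u y := by
  ext i j
  simp only [Matrix.mul_apply, Matrix.vecMulVec_apply, Matrix.smul_apply, dotProduct,
    smul_eq_mul, Finset.sum_mul, Finset.mul_sum]
  refine Finset.sum_congr rfl fun k _ => by ring

lemma wordProd_succ {K : ℕ} {ι : Type*} [Fintype ι] [DecidableEq ι]
    (S : Fin K → Matrix ι ι ℝ) (n : ℕ) (w : ℕ → Fin K) :
    wordProd S (n + 1) w = wordProd S n w * S (w n) := by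
  rw [wordProd, List.ofFn_succ', List.prod_concat]
  simp [wordProd, Fin.last]

theorem stmt18 {K d : ℕ} (hK : 2 ≤ K) (hd : 1 ≤ d)
    (S : Fin K → Matrix (Fin d) (Fin d) ℝ)
    (𝕊 : Matrix (Fin K) (Fin K) ℝ) (h01 : ∀ i j, 𝕊 i j = 0 ∨ 𝕊 i j = 1)
    (hrow : ∀ i, ∃ j, 𝕊 i j = 1)
    (n : ℕ) (hn : 2 ≤ n) (w : ℕ → Fin K)
    (hadm : Admissible 𝕊 n w) :
    wordProd (kozLift 𝕊 S) n w
      = (Matrix.vecMulVec (Pi.single (w 0) 1) (𝕊 (w (n - 1)))) ⊗ₖ (wordProd S n w) := by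
  have key : ∀ m, 1 ≤ m → m ≤ n → wordProd (kozLift 𝕊 S) m w
      = (Matrix.vecMulVec (Pi.single (w 0) 1) (𝕊 (w (m - 1)))) ⊗ₖ (wordProd S m w) := by
    intro m hm hmn
    induction m with
    | zero => omega
    | succ m ih =>
      rcases Nat.eq_or_lt_of_le hm with h1 | h1
      · simp [wordProd, kozLift, ← h1]
      · have hm1 : 1 ≤ m := by omega
        rw [wordProd_succ, wordProd_succ, ih hm1 (by omega), kozLift,
          ← Matrix.mul_kronecker_mul, vmv_mul]
        have hdot : (𝕊 (w (m - 1))) ⬝ᵥ (Pi.single (w m) 1 : Fin K → ℝ) = 1 := by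
          have := hadm (m - 1) (by omega)
          have hw : m - 1 + 1 = m := by omega
          rw [hw] at this
          simp [dotProduct, Pi.single_apply, this]
        rw [hdot, one_smul]
        simp
  exact key n (by omega) le_rfl
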